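/- In the sphere-padding construction, for every base dataset there exists a finite dimension d > 2 such that λ_max(∇²L(w*)) = λ_b := λ_max(∇²L_b(w*_b)); specifically, any d satisfying d ≥ 2 + c_b/λ_b works, where c_b = (1/n_b)Σᵢ ℓ''(-xᵢᵀw*_b)sᵢ². -/

import Mathlib

open Matrix

noncomputable def sigmoid (z : ℝ) : ℝ := 1 / (1 + Real.exp (-z))

/-- second derivative of the logistic loss ℓ(z) = log(1+exp z). -/
noncomputable def ell'' (z : ℝ) : ℝ := sigmoid z * (1 - sigmoid z)

noncomputable def lambdaMax {ι : Type*} [Fintype ι] (A : Matrix ι ι ℝ) : ℝ :=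
  sSup {t : ℝ | ∃ v : ι → ℝ, v ≠ 0 ∧ A.mulVec v = t • v}

/-! The padded Hessian is block diagonal with a scalar block `c_b/(d-2) • 1`, so its spectrum is
that of `∇²L_b(w*_b)` together with `c_b/(d-2)`; once `d ≥ 2 + c_b/λ_b` the scalar `c_b/(d-2)`
is at most `λ_b` and the largest eigenvalue is unchanged. -/

namespace Matrix

variable {K ι m : Type*} [Field K] [Fintype ι] [Fintype m]

def eigenvalueSet (A : Matrix ι ι K) : Set K :=
  {t | ∃ v : ι → K, v ≠ 0 ∧ A *ᵥ v = t • v}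

theorem eigenvalueSet_fromBlocks_zero_zero (A : Matrix ι ι K) (D : Matrix m m K) :
    eigenvalueSet (fromBlocks A 0 0 D) = eigenvalueSet A ∪ eigenvalueSet D := by
  ext t
  constructor
  · rintro ⟨v, hv, hev⟩
    have hA : A *ᵥ (v ∘ Sum.inl) = t • (v ∘ Sum.inl) :=
      funext fun i => by simpa [fromBlocks_mulVec] using congrFun hev (Sum.inl i)
    have hD : D *ᵥ (v ∘ Sum.inr) = t • (v ∘ Sum.inr) :=
      funext fun i => by simpa [fromBlocks_mulVec] using congrFun hev (Sum.inr i)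
    by_cases hv₁ : v ∘ Sum.inl = 0
    · have hv₂ : v ∘ Sum.inr ≠ 0 := fun hv₂ =>
        hv (by rw [← Sum.elim_comp_inl_inr v, hv₁, hv₂, Sum.elim_zero_zero])
      exact Or.inr ⟨_, hv₂, hD⟩
    · exact Or.inl ⟨_, hv₁, hA⟩
  · rintro (⟨v, hv, hev⟩ | ⟨v, hv, hev⟩)
    · refine ⟨Sum.elim v 0, fun h => hv (by simpa using congrArg (· ∘ Sum.inl) h), ?_⟩
      ext (j | j) <;> simp [fromBlocks_mulVec, hev]
    · refine ⟨Sum.elim 0 v, fun h => hv (by simpa using congrArg (· ∘ Sum.inr) h), ?_⟩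
      ext (j | j) <;> simp [fromBlocks_mulVec, hev]

theorem eigenvalueSet_smul_one [DecidableEq m] [Nonempty m] (μ : K) :
    eigenvalueSet (μ • (1 : Matrix m m K)) = {μ} := by
  ext t
  simp only [eigenvalueSet, smul_mulVec, one_mulVec, Set.mem_ofPred_eq, Set.mem_singleton_iff]
  constructor
  · rintro ⟨v, hv, hev⟩
    exact (smul_left_injective K hv hev).symm
  · rintro rfl
    exact ⟨1, one_ne_zero, rfl⟩

end Matrix

theorem lambdaMax_eq_sSup_eigenvalueSet {ι : Type*} [Fintype ι] (A : Matrix ι ι ℝ) :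
    lambdaMax A = sSup (eigenvalueSet A) :=
  rfl

theorem Real.sSup_insert_of_le_of_pos {S : Set ℝ} {μ : ℝ} (hS : 0 < sSup S) (hμ : μ ≤ sSup S) :
    sSup (insert μ S) = sSup S := by
  have hne : S.Nonempty := Set.nonempty_iff_ne_empty.2 fun h => by simp [h] at hS
  have hbdd : BddAbove S := by
    by_contra h
    simp [Real.sSup_of_not_bddAbove h] at hS
  rw [csSup_insert hbdd hne, sup_eq_right.2 hμ]

theorem lambdaMax_fromBlocks_smul_one_of_le {ι m : Type*} [Fintype ι] [Fintype m]
    [DecidableEq m] [Nonempty m] (A : Matrix ι ι ℝ) {μ : ℝ} (hA : 0 < lambdaMax A)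
    (hμ : μ ≤ lambdaMax A) :
    lambdaMax (fromBlocks A 0 0 (μ • (1 : Matrix m m ℝ))) = lambdaMax A := by
  rw [lambdaMax_eq_sSup_eigenvalueSet] at hA hμ ⊢
  rw [eigenvalueSet_fromBlocks_zero_zero, eigenvalueSet_smul_one, Set.union_singleton]
  exact Real.sSup_insert_of_le_of_pos hA hμ

theorem sphere_padding_dimension_suffices_general
    (HessBase : Matrix (Fin 2) (Fin 2) ℝ)
    (lamb : ℝ) (hlamb : lamb = lambdaMax HessBase) (hlamb_pos : 0 < lamb)
    (cb : ℝ) :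
    (∃ d : ℕ, 2 < d ∧
      lambdaMax (Matrix.fromBlocks HessBase 0 0
        ((cb / ((d : ℝ) - 2)) • (1 : Matrix (Fin (d - 2)) (Fin (d - 2)) ℝ))) = lamb) ∧
    (∀ d : ℕ, 2 < d → (2 : ℝ) + cb / lamb ≤ (d : ℝ) →
      lambdaMax (Matrix.fromBlocks HessBase 0 0
        ((cb / ((d : ℝ) - 2)) • (1 : Matrix (Fin (d - 2)) (Fin (d - 2)) ℝ))) = lamb) := by
  have large_d : ∀ d : ℕ, 2 < d → (2 : ℝ) + cb / lamb ≤ (d : ℝ) →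
      lambdaMax (Matrix.fromBlocks HessBase 0 0
        ((cb / ((d : ℝ) - 2)) • (1 : Matrix (Fin (d - 2)) (Fin (d - 2)) ℝ))) = lamb := by
    intro d hd hge
    have : Nonempty (Fin (d - 2)) := ⟨⟨0, by omega⟩⟩
    have hd₂ : (0 : ℝ) < d - 2 := by
      rw [sub_pos]
      exact_mod_cast hd
    have hscalar : cb / ((d : ℝ) - 2) ≤ lamb := by
      rw [div_le_iff₀ hd₂, mul_comm, ← div_le_iff₀ hlamb_pos]
      linarith
    subst hlamb
    exact lambdaMax_fromBlocks_smul_one_of_le HessBase hlamb_pos hscalar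
  refine ⟨⟨max 3 ⌈2 + cb / lamb⌉₊, by omega, large_d _ (by omega) ?_⟩, large_d⟩
  calc (2 : ℝ) + cb / lamb ≤ ⌈2 + cb / lamb⌉₊ := Nat.le_ceil _
    _ ≤ (max 3 ⌈2 + cb / lamb⌉₊ : ℕ) := by exact_mod_cast le_max_right _ _

theorem sphere_padding_dimension_suffices
    (nb : ℕ) (hnb : 0 < nb)
    (x : Fin nb → (Fin 2 → ℝ)) (hx : ∀ i, Real.sqrt (∑ k, x i k ^ 2) ≤ 1)
    (wb : Fin 2 → ℝ)
    (s : Fin nb → ℝ) (hs : ∀ i, s i = Real.sqrt (1 - ∑ k, x i k ^ 2))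
    (HessBase : Matrix (Fin 2) (Fin 2) ℝ)
    (hHessBase : HessBase =
      (1 / (nb : ℝ)) • ∑ i, ell'' (-(wb ⬝ᵥ x i)) • vecMulVec (x i) (x i))
    (lamb : ℝ) (hlamb : lamb = lambdaMax HessBase) (hlamb_pos : 0 < lamb)
    (cb : ℝ)
    (hcb : cb = (1 / (nb : ℝ)) * ∑ i, ell'' (-(wb ⬝ᵥ x i)) * s i ^ 2) :
    (∃ d : ℕ, 2 < d ∧
      lambdaMax (Matrix.fromBlocks HessBase 0 0
        ((cb / ((d : ℝ) - 2)) • (1 : Matrix (Fin (d - 2)) (Fin (d - 2)) ℝ))) = lamb) ∧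
    (∀ d : ℕ, 2 < d → (2 : ℝ) + cb / lamb ≤ (d : ℝ) →
      lambdaMax (Matrix.fromBlocks HessBase 0 0
        ((cb / ((d : ℝ) - 2)) • (1 : Matrix (Fin (d - 2)) (Fin (d - 2)) ℝ))) = lamb) :=
  sphere_padding_dimension_suffices_general HessBase lamb hlamb hlamb_pos cb
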